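/- arXiv:2212.09388 — 2 statements merged into one kernel-verified Lean document; each statement's English description precedes it below -/
import Mathlib

section
/- Let N ≥ 1 and let functions f_{jk}(φ) = cos(φ_j - φ_k - χ_{jk}) for 1 ≤ j < k ≤ N be defined on ℝ^N, where χ_{jk} ∈ ℝ are fixed constants. If real coefficients a_{jk} satisfy ∑_{j<k} a_{jk} cos(φ_j - φ_k - χ_{jk}) = 0 for all φ ∈ ℝ^N, then a_{jk} = 0 for all j < k. -/
theorem no_blockade_full_SUN (N : ℕ) (hN : 1 ≤ N)
    (a χ : Fin N → Fin N → ℝ)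
    (h : ∀ φ : Fin N → ℝ,
      ∑ p ∈ Finset.univ.filter (fun p : Fin N × Fin N => p.1 < p.2),
        a p.1 p.2 * Real.cos (φ p.1 - φ p.2 - χ p.1 p.2) = 0) :
    ∀ j k : Fin N, j < k → a j k = 0 := by
  intro j k hjk
  have hkj : k ≠ j := by omega
  set c := χ j k with hc
  set S := Finset.univ.filter (fun p : Fin N × Fin N => p.1 < p.2) with hS
  set φ : ℝ → ℝ → Fin N → ℝ :=
    fun s t i => if i = j then s else if i = k then t else 0 with hφ
  have h1 := h (φ c 0)
  have h2 := h (φ c Real.pi)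
  have h3 := h (φ (c + Real.pi) 0)
  have h4 := h (φ (c + Real.pi) Real.pi)
  have key : ∑ p ∈ S,
      (a p.1 p.2 * Real.cos (φ c 0 p.1 - φ c 0 p.2 - χ p.1 p.2)
       - a p.1 p.2 * Real.cos (φ c Real.pi p.1 - φ c Real.pi p.2 - χ p.1 p.2)
       - a p.1 p.2 * Real.cos (φ (c+Real.pi) 0 p.1 - φ (c+Real.pi) 0 p.2 - χ p.1 p.2)
       + a p.1 p.2 * Real.cos (φ (c+Real.pi) Real.pi p.1 - φ (c+Real.pi) Real.pi p.2 - χ p.1 p.2))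
      = 4 * a j k := by
    have hmem : ((j, k) : Fin N × Fin N) ∈ S := by simp [hS, hjk]
    rw [Finset.sum_eq_single_of_mem (j, k) hmem]
    · simp [hφ, hkj, ← hc]
      ring
    · rintro ⟨u, v⟩ hp hne
      have huv : u < v := by simpa [hS] using hp
      have hne' : u ≠ j ∨ v ≠ k := by
        by_contra hcon
        push_neg at hcon
        exact hne (Prod.ext hcon.1 hcon.2)
      by_cases hu : u = j
      · have hvj : v ≠ j := by omega
        have hv : v ≠ k := by rcases hne' with h' | h'; exact absurd hu h'; exact h'
        simp [hφ, hu, hvj, hv]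
      · have huk : u ≠ k ∨ v ≠ k := by
          by_cases huk : u = k
          · right; omega
          · left; exact huk
        by_cases hv : v = k
        · have huk' : u ≠ k := by omega
          have hvj : v ≠ j := by omega
          simp [hφ, hu, huk', hv, hkj]
        · by_cases huk2 : u = k
          · have hvj : v ≠ j := by omega
            simp [hφ, hu, huk2, hvj, hv, hkj]
          · by_cases hvj : v = j
            · simp [hφ, hu, huk2, hvj, hkj, hjk.ne]
            · simp [hφ, hu, huk2, hvj, hv]
  rw [Finset.sum_add_distrib, Finset.sum_sub_distrib, Finset.sum_sub_distrib] at key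
  rw [h1, h2, h3, h4] at key
  linarith
end

section
/- The family of functions {(φ_1,...,φ_N) ↦ cos(φ_j - φ_k - χ_{jk}) : 1 ≤ j < k ≤ N} is linearly independent over ℝ as functions from ℝ^N to ℝ, for any fixed real constants χ_{jk}. -/
open Real

private lemma combA_two (χ : ℝ) :
    cos (2*0 - χ) + cos (2*π - χ) - cos (2*(π/2) - χ) - cos (2*(3*π/2) - χ) = 4 * cos χ := by
  rw [show 2*0 - χ = -χ by ring, show 2*(π/2) - χ = π - χ by ring,
      show 2*(3*π/2) - χ = (π - χ) + 2*π by ring, Real.cos_add_two_pi,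
      show 2*π - χ = -χ + 2*π by ring, Real.cos_add_two_pi, Real.cos_neg, Real.cos_pi_sub]
  ring

private lemma combB_two (χ : ℝ) :
    cos (2*(π/4) - χ) + cos (2*(5*π/4) - χ) - cos (2*(3*π/4) - χ) - cos (2*(7*π/4) - χ)
      = 4 * sin χ := by
  rw [show 2*(π/4) - χ = π/2 - χ by ring, show 2*(5*π/4) - χ = (π/2 - χ) + 2*π by ring,
      Real.cos_add_two_pi,
      show 2*(3*π/4) - χ = (π/2 - χ) + π by ring, Real.cos_add_pi,
      show 2*(7*π/4) - χ = ((π/2 - χ) + π) + 2*π by ring, Real.cos_add_two_pi, Real.cos_add_pi,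
      Real.cos_pi_div_two_sub]
  ring

private lemma combA_small (c χ : ℝ) (h : c = 1 ∨ c = -1 ∨ c = 0) :
    cos (c*0 - χ) + cos (c*π - χ) - cos (c*(π/2) - χ) - cos (c*(3*π/2) - χ) = 0 := by
  rcases h with h | h | h <;> subst h
  · rw [show 1*0 - χ = -χ by ring, show 1*π - χ = π - χ by ring,
        show 1*(3*π/2) - χ = (1*(π/2) - χ) + π by ring, Real.cos_add_pi,
        Real.cos_neg, Real.cos_pi_sub]
    ring
  · rw [show (-1)*0 - χ = -χ by ring, show (-1)*π - χ = -(χ + π) by ring,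
        show (-1)*(3*π/2) - χ = -((π/2 + χ) + π) by ring,
        show (-1)*(π/2) - χ = -(π/2 + χ) by ring]
    simp only [Real.cos_neg]
    rw [Real.cos_add_pi, Real.cos_add_pi]
    ring
  · simp

private lemma combB_small (c χ : ℝ) (h : c = 1 ∨ c = -1 ∨ c = 0) :
    cos (c*(π/4) - χ) + cos (c*(5*π/4) - χ) - cos (c*(3*π/4) - χ) - cos (c*(7*π/4) - χ) = 0 := by
  rcases h with h | h | h <;> subst h
  · rw [show 1*(5*π/4) - χ = (1*(π/4) - χ) + π by ring, Real.cos_add_pi,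
        show 1*(7*π/4) - χ = (1*(3*π/4) - χ) + π by ring, Real.cos_add_pi]
    ring
  · rw [show (-1)*(π/4) - χ = -(π/4 + χ) by ring, show (-1)*(5*π/4) - χ = -((π/4 + χ) + π) by ring,
        show (-1)*(3*π/4) - χ = -(3*π/4 + χ) by ring,
        show (-1)*(7*π/4) - χ = -((3*π/4 + χ) + π) by ring]
    simp only [Real.cos_neg]
    rw [Real.cos_add_pi, Real.cos_add_pi]
    ring
  · simp

theorem cos_phase_diff_linearIndependent (N : ℕ) (hN : 2 ≤ N)
    (χ : Fin N → Fin N → ℝ) :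
    LinearIndependent ℝ
      (fun p : {p : Fin N × Fin N // p.1 < p.2} =>
        (fun φ : Fin N → ℝ => Real.cos (φ p.1.1 - φ p.1.2 - χ p.1.1 p.1.2))) := by
  classical
  rw [Fintype.linearIndependent_iff]
  intro g hg q
  obtain ⟨⟨j, k⟩, hjk⟩ := q
  have hjk' : j < k := hjk
  set ψ : Fin N → ℝ := fun m => if m = j then 1 else if m = k then -1 else 0 with hψdef
  set c : {p : Fin N × Fin N // p.1 < p.2} → ℝ := fun p => ψ p.1.1 - ψ p.1.2 with hcdef
  have H : ∀ s : ℝ,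
      ∑ p : {p : Fin N × Fin N // p.1 < p.2},
        g p * Real.cos (c p * s - χ p.1.1 p.1.2) = 0 := by
    intro s
    have h1 := congrFun hg (fun m => ψ m * s)
    simp only [Finset.sum_apply, Pi.smul_apply, smul_eq_mul, Pi.zero_apply] at h1
    rw [← h1]
    refine Finset.sum_congr rfl fun p _ => ?_
    rw [hcdef, sub_mul]
  have hcq : c ⟨(j, k), hjk⟩ = 2 := by
    simp [hcdef, hψdef, hjk'.ne']
    norm_num
  have hcne : ∀ p : {p : Fin N × Fin N // p.1 < p.2}, p ≠ ⟨(j, k), hjk⟩ →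
      c p = 1 ∨ c p = -1 ∨ c p = 0 := by
    rintro ⟨⟨a, b⟩, hab⟩ hne
    have hab' : a < b := hab
    by_cases haj : a = j
    · by_cases hbk : b = k
      · exact absurd (Subtype.ext (Prod.ext haj hbk)) hne
      · left
        have hbj : b ≠ j := (show j < b from haj ▸ hab').ne'
        simp [hcdef, hψdef, haj, hbj, hbk]
    · by_cases hak : a = k
      · have hkb : k < b := hak ▸ hab'
        have hbj : b ≠ j := (hjk'.trans hkb).ne'
        have hbk : b ≠ k := hkb.ne'
        right; left
        simp [hcdef, hψdef, haj, hak, hbj, hbk, hjk'.ne']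
      · by_cases hbj : b = j
        · right; left; simp [hcdef, hψdef, haj, hak, hbj]
        · by_cases hbk : b = k
          · left; simp [hcdef, hψdef, haj, hak, hbj, hbk, hjk'.ne']
          · right; right; simp [hcdef, hψdef, haj, hak, hbj, hbk]
  have E1 : ∑ p : {p : Fin N × Fin N // p.1 < p.2},
      g p * (cos (c p * 0 - χ p.1.1 p.1.2) + cos (c p * π - χ p.1.1 p.1.2)
        - cos (c p * (π/2) - χ p.1.1 p.1.2) - cos (c p * (3*π/2) - χ p.1.1 p.1.2)) = 0 := by
    simp only [mul_add, mul_sub]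
    rw [Finset.sum_sub_distrib, Finset.sum_sub_distrib, Finset.sum_add_distrib,
        H 0, H π, H (π/2), H (3*π/2)]
    ring
  have E2 : ∑ p : {p : Fin N × Fin N // p.1 < p.2},
      g p * (cos (c p * (π/4) - χ p.1.1 p.1.2) + cos (c p * (5*π/4) - χ p.1.1 p.1.2)
        - cos (c p * (3*π/4) - χ p.1.1 p.1.2) - cos (c p * (7*π/4) - χ p.1.1 p.1.2)) = 0 := by
    simp only [mul_add, mul_sub]
    rw [Finset.sum_sub_distrib, Finset.sum_sub_distrib, Finset.sum_add_distrib,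
        H (π/4), H (5*π/4), H (3*π/4), H (7*π/4)]
    ring
  rw [Finset.sum_eq_single (⟨(j, k), hjk⟩ : {p : Fin N × Fin N // p.1 < p.2})
      (fun p _ hp => by rw [combA_small (c p) _ (hcne p hp), mul_zero])
      (fun h => absurd (Finset.mem_univ _) h)] at E1
  rw [Finset.sum_eq_single (⟨(j, k), hjk⟩ : {p : Fin N × Fin N // p.1 < p.2})
      (fun p _ hp => by rw [combB_small (c p) _ (hcne p hp), mul_zero])
      (fun h => absurd (Finset.mem_univ _) h)] at E2
  rw [hcq, combA_two] at E1
  rw [hcq, combB_two] at E2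
  nlinarith [Real.sin_sq_add_cos_sq (χ j k), sq_nonneg (g ⟨(j,k),hjk⟩)]
end
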